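/- Assume H is invertible. If u and v are both open-loop Nash equilibria of the delay-free game from the same initial state y_0 ∈ ℝⁿ, then y_u(T) = y_v(T) = H⁻¹·exp(TΛ)·y_0 and, for every player i, u_i(t) = v_i(t) for almost every t ∈ [0,T]; i.e., the open-loop Nash equilibrium is unique (up to null sets). -/

import Mathlib

open Matrix MeasureTheory
open scoped Matrix

noncomputable section

/-- The matrix exponential of a real `n × n` matrix. -/
def mexp {n : ℕ} (A : Matrix (Fin n) (Fin n) ℝ) : Matrix (Fin n) (Fin n) ℝ :=
  NormedSpace.exp A

/-- An admissible control of the delayed game: a bounded measurable function `u : ℝ → ℝ`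
with `u s = 0` for `s < 0`. -/
def AdmissibleD (u : ℝ → ℝ) : Prop :=
  Measurable u ∧ (∃ C, ∀ s, |u s| ≤ C) ∧ ∀ s < 0, u s = 0

/-- An admissible control of the delay-free game: a bounded measurable function. -/
def AdmissibleF (u : ℝ → ℝ) : Prop :=
  Measurable u ∧ ∃ C, ∀ s, |u s| ≤ C

/-- Data of the differential games of opinion formation: the system matrix `Λ`
(the continuous-time Hegselmann–Krause matrix `Λ = D⁻¹A − I`), the input delay `τ`,
the terminal time `tf`, and for each player `i` the input vector `B i`, the control
weight `r i`, the neighborhood size `d i = |𝒩ᵢ|`, the agent-`i` graph Laplacian `L i`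
and the stubbornness coefficient `ω i`. -/
structure GameData (n : ℕ) where
  Λ : Matrix (Fin n) (Fin n) ℝ
  τ : ℝ
  tf : ℝ
  B : Fin n → Fin n → ℝ
  r : Fin n → ℝ
  d : Fin n → ℝ
  L : Fin n → Matrix (Fin n) (Fin n) ℝ
  ω : Fin n → ℝ

namespace GameData

variable {n : ℕ} (G : GameData n)

/-- The standing hypotheses: `τ ≥ 0`, `t_f > τ`, `rᵢ > 0`, `dᵢ > 0`, each `Lᵢ` symmetric
positive semidefinite, and `ωᵢ ∈ [0,1]`. -/
def Valid : Prop :=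
  0 ≤ G.τ ∧ G.τ < G.tf ∧ (∀ i, 0 < G.r i) ∧ (∀ i, 0 < G.d i) ∧
    (∀ i, (G.L i).PosSemidef) ∧ ∀ i, G.ω i ∈ Set.Icc (0 : ℝ) 1

/-- `T = t_f − τ`. -/
def T : ℝ := G.tf - G.τ

/-- `B̂ᵢ = exp(−τΛ)·Bᵢ`. -/
def Bhat (i : Fin n) : Fin n → ℝ := (mexp ((-G.τ) • G.Λ)).mulVec (G.B i)

/-- `L̂ᵢ = exp(τΛᵀ)·Lᵢ·exp(τΛ)`. -/
def Lhat (i : Fin n) : Matrix (Fin n) (Fin n) ℝ :=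
  mexp (G.τ • G.Λᵀ) * G.L i * mexp (G.τ • G.Λ)

/-- `Sᵢ = (1/rᵢ)·B̂ᵢ·B̂ᵢᵀ`. -/
def S (i : Fin n) : Matrix (Fin n) (Fin n) ℝ :=
  (1 / G.r i) • vecMulVec (G.Bhat i) (G.Bhat i)

/-- The matrix `∫₀ᵗ exp((t−s)Λ)·Sᵢ·exp((T−s)Λᵀ) ds` (entrywise integral). -/
def Phi (T' : ℝ) (i : Fin n) (t : ℝ) : Matrix (Fin n) (Fin n) ℝ :=
  Matrix.of fun a b =>
    ∫ s in (0:ℝ)..t, (mexp ((t - s) • G.Λ) * G.S i * mexp ((T' - s) • G.Λᵀ)) a b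

/-- `Ψᵢ = ∫₀ᵀ exp((T−s)Λ)·Sᵢ·exp((T−s)Λᵀ) ds` with `T = t_f − τ`. -/
def Psi (i : Fin n) : Matrix (Fin n) (Fin n) ℝ := G.Phi G.T i G.T

/-- `H = I + ∑ⱼ (1/dⱼ)·Ψⱼ·L̂ⱼ`. -/
def H : Matrix (Fin n) (Fin n) ℝ :=
  1 + ∑ j : Fin n, (1 / G.d j) • (G.Psi j * G.Lhat j)

/-- `Wᵢ`: the matrix whose `(i,i)` entry is `ωᵢ` and all other entries are `0`. -/
def W (i : Fin n) : Matrix (Fin n) (Fin n) ℝ := Matrix.single i i (G.ω i)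

/-- `Ŵᵢ = exp(τΛᵀ)·Wᵢ·exp(τΛ)`. -/
def What (i : Fin n) : Matrix (Fin n) (Fin n) ℝ :=
  mexp (G.τ • G.Λᵀ) * G.W i * mexp (G.τ • G.Λ)

/-- `Ĥ = I + ∑ⱼ Ψⱼ·(Ŵⱼ + ((1−ωⱼ)/dⱼ)·L̂ⱼ)`. -/
def Hhat : Matrix (Fin n) (Fin n) ℝ :=
  1 + ∑ j : Fin n, G.Psi j * (G.What j + ((1 - G.ω j) / G.d j) • G.Lhat j)

/-- The trajectory of the delayed game:
`x_u(t) = exp(tΛ)·x₀ + ∫₀ᵗ exp((t−s)Λ)·(∑ⱼ Bⱼ·uⱼ(s−τ)) ds`. -/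
def xtraj (x0 : Fin n → ℝ) (u : Fin n → ℝ → ℝ) (t : ℝ) : Fin n → ℝ :=
  (mexp (t • G.Λ)).mulVec x0 +
    ∫ s in (0:ℝ)..t, (mexp ((t - s) • G.Λ)).mulVec (∑ j : Fin n, u j (s - G.τ) • G.B j)

/-- The trajectory of the delay-free game:
`y_u(t) = exp(tΛ)·y₀ + ∫₀ᵗ exp((t−s)Λ)·(∑ⱼ B̂ⱼ·uⱼ(s)) ds`. -/
def ytraj (y0 : Fin n → ℝ) (u : Fin n → ℝ → ℝ) (t : ℝ) : Fin n → ℝ :=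
  (mexp (t • G.Λ)).mulVec y0 +
    ∫ s in (0:ℝ)..t, (mexp ((t - s) • G.Λ)).mulVec (∑ j : Fin n, u j s • G.Bhat j)

/-- Player `i`'s cost in the delayed game:
`Jᵢ(u) = (1/dᵢ)·x_u(t_f)ᵀ·Lᵢ·x_u(t_f) + ∫₀^{t_f} rᵢ·uᵢ(t−τ)² dt`. -/
def J (x0 : Fin n → ℝ) (i : Fin n) (u : Fin n → ℝ → ℝ) : ℝ :=
  (1 / G.d i) * (G.xtraj x0 u G.tf ⬝ᵥ (G.L i).mulVec (G.xtraj x0 u G.tf)) +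
    ∫ t in (0:ℝ)..G.tf, G.r i * u i (t - G.τ) ^ 2

/-- Player `i`'s cost in the delay-free game:
`Ĵᵢ(u) = (1/dᵢ)·y_u(T)ᵀ·L̂ᵢ·y_u(T) + ∫₀ᵀ rᵢ·uᵢ(t)² dt`. -/
def JF (y0 : Fin n → ℝ) (i : Fin n) (u : Fin n → ℝ → ℝ) : ℝ :=
  (1 / G.d i) * (G.ytraj y0 u G.T ⬝ᵥ (G.Lhat i).mulVec (G.ytraj y0 u G.T)) +
    ∫ t in (0:ℝ)..G.T, G.r i * u i t ^ 2

/-- Player `i`'s stubborn cost in the delayed game. -/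
def Jstub (x0 : Fin n → ℝ) (i : Fin n) (u : Fin n → ℝ → ℝ) : ℝ :=
  (G.xtraj x0 u G.tf - x0) ⬝ᵥ (G.W i).mulVec (G.xtraj x0 u G.tf - x0) +
    ((1 - G.ω i) / G.d i) * (G.xtraj x0 u G.tf ⬝ᵥ (G.L i).mulVec (G.xtraj x0 u G.tf)) +
    ∫ t in (0:ℝ)..G.tf, G.r i * u i (t - G.τ) ^ 2

/-- Player `i`'s stubborn cost in the delay-free game, with reference opinion `x₀`. -/
def JstubF (x0 y0 : Fin n → ℝ) (i : Fin n) (u : Fin n → ℝ → ℝ) : ℝ :=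
  ((mexp (G.τ • G.Λ)).mulVec (G.ytraj y0 u G.T) - x0) ⬝ᵥ
      (G.W i).mulVec ((mexp (G.τ • G.Λ)).mulVec (G.ytraj y0 u G.T) - x0) +
    ((1 - G.ω i) / G.d i) * (G.ytraj y0 u G.T ⬝ᵥ (G.Lhat i).mulVec (G.ytraj y0 u G.T)) +
    ∫ t in (0:ℝ)..G.T, G.r i * u i t ^ 2

/-- Open-loop Nash equilibrium of the delayed game. -/
def NashD (x0 : Fin n → ℝ) (u : Fin n → ℝ → ℝ) : Prop :=
  (∀ i, AdmissibleD (u i)) ∧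
    ∀ i, ∀ v : ℝ → ℝ, AdmissibleD v →
      G.J x0 i u ≤ G.J x0 i (Function.update u i v)

/-- Open-loop Nash equilibrium of the delay-free game. -/
def NashF (y0 : Fin n → ℝ) (u : Fin n → ℝ → ℝ) : Prop :=
  (∀ i, AdmissibleF (u i)) ∧
    ∀ i, ∀ v : ℝ → ℝ, AdmissibleF v →
      G.JF y0 i u ≤ G.JF y0 i (Function.update u i v)

/-- Open-loop Nash equilibrium of the stubborn delayed game. -/
def NashStubD (x0 : Fin n → ℝ) (u : Fin n → ℝ → ℝ) : Prop :=
  (∀ i, AdmissibleD (u i)) ∧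
    ∀ i, ∀ v : ℝ → ℝ, AdmissibleD v →
      G.Jstub x0 i u ≤ G.Jstub x0 i (Function.update u i v)

/-- Open-loop Nash equilibrium of the stubborn delay-free game. -/
def NashStubF (x0 y0 : Fin n → ℝ) (u : Fin n → ℝ → ℝ) : Prop :=
  (∀ i, AdmissibleF (u i)) ∧
    ∀ i, ∀ v : ℝ → ℝ, AdmissibleF v →
      G.JstubF x0 y0 i u ≤ G.JstubF x0 y0 i (Function.update u i v)

end GameData

/-! Perturbing player `i`'s control in a direction `w` changes `Ĵᵢ` by
`2ε ∫₀ᵀ w·gᵢ + O(ε²)`, where `gᵢ(t) = (1/dᵢ)·(exp((T−t)Λ)B̂ᵢ)ᵀ·L̂ᵢ·y(T) + rᵢ·uᵢ(t)`. At an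
equilibrium the linear term vanishes for every `w`, and `w = gᵢ` forces `gᵢ = 0` a.e.: this is the
feedback law `uᵢ(t) = −(1/(dᵢrᵢ))·(exp((T−t)Λ)B̂ᵢ)ᵀ·L̂ᵢ·y(T)`. Substituting it into the variation
of constants formula turns the terminal state into a solution of `H·y(T) = exp(TΛ)·y₀`, which
pins down `y(T)`, and then the feedback law pins down the controls. -/

section MatrixExp

variable {n : ℕ}

theorem continuous_mexp_smul (A : Matrix (Fin n) (Fin n) ℝ) :
    Continuous fun s : ℝ => mexp (s • A) := by
  let _ : NormedRing (Matrix (Fin n) (Fin n) ℝ) := Matrix.linftyOpNormedRing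
  let _ : NormedAlgebra ℝ (Matrix (Fin n) (Fin n) ℝ) := Matrix.linftyOpNormedAlgebra
  let _ : NormedAlgebra ℚ (Matrix (Fin n) (Fin n) ℝ) :=
    NormedAlgebra.restrictScalars ℚ ℝ (Matrix (Fin n) (Fin n) ℝ)
  exact NormedSpace.exp_continuous.comp (continuous_id.smul continuous_const)

theorem mexp_smul_transpose (c : ℝ) (A : Matrix (Fin n) (Fin n) ℝ) :
    mexp (c • Aᵀ) = (mexp (c • A))ᵀ := by
  rw [← transpose_smul]
  exact exp_transpose _

end MatrixExp

namespace AdmissibleF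

variable {u w : ℝ → ℝ}

theorem add (hu : AdmissibleF u) (hw : AdmissibleF w) : AdmissibleF fun t => u t + w t := by
  obtain ⟨hum, C, hC⟩ := hu
  obtain ⟨hwm, D, hD⟩ := hw
  exact ⟨hum.add hwm, C + D, fun s => (abs_add_le _ _).trans (add_le_add (hC s) (hD s))⟩

theorem const_mul (hu : AdmissibleF u) (c : ℝ) : AdmissibleF fun t => c * u t := by
  obtain ⟨hum, C, hC⟩ := hu
  refine ⟨hum.const_mul c, |c| * C, fun s => ?_⟩
  rw [abs_mul]
  exact mul_le_mul_of_nonneg_left (hC s) (abs_nonneg c)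

theorem mul (hu : AdmissibleF u) (hw : AdmissibleF w) : AdmissibleF fun t => u t * w t := by
  obtain ⟨hum, C, hC⟩ := hu
  obtain ⟨hwm, D, hD⟩ := hw
  refine ⟨hum.mul hwm, C * D, fun s => ?_⟩
  rw [abs_mul]
  exact mul_le_mul (hC s) (hD s) (abs_nonneg _) ((abs_nonneg _).trans (hC s))

theorem intervalIntegrable (hu : AdmissibleF u) (a b : ℝ) :
    IntervalIntegrable u volume a b := by
  obtain ⟨hum, C, hC⟩ := hu
  refine (intervalIntegrable_const (c := C)).mono_fun hum.aestronglyMeasurable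
    (Filter.Eventually.of_forall fun s => ?_)
  simpa using (hC s).trans (le_abs_self C)

theorem intervalIntegrable_smul {E : Type*} [NormedAddCommGroup E] [NormedSpace ℝ E]
    (hu : AdmissibleF u) {g : ℝ → E} (hg : Continuous g) (a b : ℝ) :
    IntervalIntegrable (fun s => u s • g s) volume a b :=
  (hu.intervalIntegrable a b).smul_continuousOn hg.continuousOn

theorem indicator_Icc {k : ℝ → ℝ} (hk : Continuous k) (a b : ℝ) :
    AdmissibleF ((Set.Icc a b).indicator k) := by
  obtain ⟨C, hC⟩ := isCompact_Icc.exists_bound_of_continuousOn hk.continuousOn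
  refine ⟨hk.measurable.indicator measurableSet_Icc, max C 0, fun s => ?_⟩
  by_cases hs : s ∈ Set.Icc a b
  · rw [Set.indicator_of_mem hs]
    exact le_max_of_le_left (hC s hs)
  · simp [Set.indicator_of_notMem hs]

theorem ae_eq_zero_of_integral_mul_self_eq_zero (hu : AdmissibleF u) {a b : ℝ} (hab : a ≤ b)
    (h : ∫ t in a..b, u t * u t = 0) : ∀ᵐ t ∂volume.restrict (Set.Ioc a b), u t = 0 := by
  have hsq := (intervalIntegral.integral_eq_zero_iff_of_le_of_nonneg_ae hab
    (Filter.Eventually.of_forall fun t => mul_self_nonneg (u t))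
    ((hu.mul hu).intervalIntegrable a b)).mp h
  filter_upwards [hsq] with t ht
  exact mul_self_eq_zero.mp ht

end AdmissibleF

section IntervalIntegralPi

variable {ι κ : Type*} [Fintype ι] [Fintype κ] {a b : ℝ}

theorem intervalIntegral_apply {f : ℝ → ι → ℝ} (hf : IntervalIntegrable f volume a b) (k : ι) :
    (∫ s in a..b, f s) k = ∫ s in a..b, f s k :=
  ((ContinuousLinearMap.proj (R := ℝ) (φ := fun _ : ι => ℝ) k).intervalIntegral_comp_comm hf).symm

theorem intervalIntegral_dotProduct {f : ℝ → ι → ℝ} (hf : IntervalIntegrable f volume a b)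
    (v : ι → ℝ) : (∫ s in a..b, f s) ⬝ᵥ v = ∫ s in a..b, f s ⬝ᵥ v :=
  ((LinearMap.toContinuousLinearMap ((dotProductBilin ℝ ℝ).flip v)).intervalIntegral_comp_comm
    hf).symm

theorem of_intervalIntegral_mulVec {M : ℝ → Matrix ι κ ℝ} (hM : Continuous M) (v : κ → ℝ) :
    (Matrix.of fun i k => ∫ s in a..b, M s i k) *ᵥ v = ∫ s in a..b, M s *ᵥ v := by
  ext i
  rw [intervalIntegral_apply ((hM.matrix_mulVec continuous_const).intervalIntegrable a b)]
  simp only [mulVec, dotProduct, of_apply]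
  refine Eq.trans ?_ (intervalIntegral.integral_finsetSum fun k _ =>
    ((hM.matrix_elem i k).mul continuous_const).intervalIntegrable a b).symm
  simp only [Pi.mul_apply, intervalIntegral.integral_mul_const]

end IntervalIntegralPi

theorem add_smul_dotProduct_mulVec_add_smul {ι : Type*} [Fintype ι] {Q : Matrix ι ι ℝ}
    (hQ : Qᵀ = Q) (y a : ι → ℝ) (ε : ℝ) :
    (y + ε • a) ⬝ᵥ Q *ᵥ (y + ε • a) =
      y ⬝ᵥ Q *ᵥ y + ε * (2 * (a ⬝ᵥ Q *ᵥ y)) + ε ^ 2 * (a ⬝ᵥ Q *ᵥ a) := by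
  have hsymm : y ⬝ᵥ Q *ᵥ a = a ⬝ᵥ Q *ᵥ y := by
    rw [dotProduct_mulVec, ← mulVec_transpose, hQ, dotProduct_comm]
  simp only [mulVec_add, mulVec_smul, dotProduct_add, add_dotProduct, dotProduct_smul,
    smul_dotProduct, smul_eq_mul, hsymm]
  ring

theorem eq_zero_of_forall_mul_add_sq_mul_nonneg {c q : ℝ} (h : ∀ ε : ℝ, 0 ≤ ε * c + ε ^ 2 * q) :
    c = 0 := by
  -- `ε = -c / (|q| + 1)` makes the quadratic `c² (q - |q| - 1) / (|q| + 1)² < 0` unless `c = 0`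
  have hε := h (-c / (|q| + 1))
  have hpos : 0 < |q| + 1 := by positivity
  field_simp at hε
  nlinarith [le_abs_self q, sq_nonneg c]

namespace GameData

variable {n : ℕ} (G : GameData n)

def impulse (i : Fin n) (s : ℝ) : Fin n → ℝ := mexp ((G.T - s) • G.Λ) *ᵥ G.Bhat i

theorem continuous_impulse (i : Fin n) : Continuous (G.impulse i) :=
  ((continuous_mexp_smul G.Λ).comp (continuous_const.sub continuous_id)).matrix_mulVec
    continuous_const

theorem T_nonneg (hG : G.Valid) : 0 ≤ G.T := sub_nonneg.2 hG.2.1.le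

theorem Lhat_transpose (hG : G.Valid) (i : Fin n) : (G.Lhat i)ᵀ = G.Lhat i := by
  have hL : (G.L i)ᵀ = G.L i := (hG.2.2.2.2.1 i).1
  simp only [Lhat, transpose_mul, hL, ← mexp_smul_transpose, transpose_transpose, Matrix.mul_assoc]

theorem Psi_mulVec (j : Fin n) (v : Fin n → ℝ) :
    G.Psi j *ᵥ v = (1 / G.r j) • ∫ s in 0..G.T, (G.impulse j s ⬝ᵥ v) • G.impulse j s := by
  have hT : Continuous fun s : ℝ => G.T - s := continuous_const.sub continuous_id
  have hE := (continuous_mexp_smul G.Λ).comp hT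
  have hET := (continuous_mexp_smul G.Λᵀ).comp hT
  refine (of_intervalIntegral_mulVec
    (M := fun s => mexp ((G.T - s) • G.Λ) * G.S j * mexp ((G.T - s) • G.Λᵀ))
    ((hE.matrix_mul continuous_const).matrix_mul hET) v).trans ?_
  rw [← intervalIntegral.integral_smul]
  refine intervalIntegral.integral_congr fun s _ => ?_
  simp only [mexp_smul_transpose, ← mulVec_mulVec, S, smul_mulVec,
    vecMulVec_mulVec, op_smul_eq_smul, mulVec_smul, impulse, dotProduct_mulVec, vecMul_transpose]

variable {G}

theorem ytraj_T_eq_sum {u : Fin n → ℝ → ℝ} (hu : ∀ j, AdmissibleF (u j)) (y0 : Fin n → ℝ) :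
    G.ytraj y0 u G.T = mexp (G.T • G.Λ) *ᵥ y0 + ∑ j, ∫ s in 0..G.T, u j s • G.impulse j s := by
  rw [ytraj, ← intervalIntegral.integral_finsetSum fun j _ =>
    (hu j).intervalIntegrable_smul (G.continuous_impulse j) 0 G.T]
  simp only [mulVec_sum, mulVec_smul, impulse]

theorem ytraj_update {u : Fin n → ℝ → ℝ} (hu : ∀ j, AdmissibleF (u j)) {w : ℝ → ℝ}
    (hw : AdmissibleF w) (y0 : Fin n → ℝ) (i : Fin n) (ε : ℝ) :
    G.ytraj y0 (Function.update u i fun t => u i t + ε * w t) G.T =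
      G.ytraj y0 u G.T + ε • ∫ s in 0..G.T, w s • G.impulse i s := by
  have hupd : ∀ j, AdmissibleF (Function.update u i (fun t => u i t + ε * w t) j) :=
    (Function.forall_update_iff u (p := fun _ v => AdmissibleF v)).2
      ⟨(hu i).add (hw.const_mul ε), fun j _ => hu j⟩
  have hother : ∀ j ∈ ({i}ᶜ : Finset (Fin n)),
      Function.update u i (fun t => u i t + ε * w t) j = u j := fun j hj =>
    Function.update_of_ne (by simpa using hj) _ _
  rw [ytraj_T_eq_sum hupd, ytraj_T_eq_sum hu, Fintype.sum_eq_add_sum_compl i,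
    Fintype.sum_eq_add_sum_compl i, Function.update_self, Finset.sum_congr rfl fun j hj => by
      rw [hother j hj]]
  have hεw : IntervalIntegrable (fun s => ε • w s • G.impulse i s) volume 0 G.T :=
    (hw.intervalIntegrable_smul (G.continuous_impulse i) 0 G.T).smul ε
  simp only [add_smul, mul_smul]
  rw [intervalIntegral.integral_add
    ((hu i).intervalIntegrable_smul (G.continuous_impulse i) 0 G.T) hεw,
    intervalIntegral.integral_smul]
  abel

variable (G)

/-- Half the L² gradient of player `i`'s cost `Ĵᵢ` with respect to its own control. -/
def costGradient (y0 : Fin n → ℝ) (u : Fin n → ℝ → ℝ) (i : Fin n) (t : ℝ) : ℝ :=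
  (1 / G.d i) * (G.impulse i t ⬝ᵥ G.Lhat i *ᵥ G.ytraj y0 u G.T) + G.r i * u i t

variable {G}

theorem intervalIntegral_mul_costGradient {u : Fin n → ℝ → ℝ} (hu : ∀ j, AdmissibleF (u j))
    {w : ℝ → ℝ} (hw : AdmissibleF w) (y0 : Fin n → ℝ) (i : Fin n) :
    ∫ t in 0..G.T, w t * G.costGradient y0 u i t =
      (1 / G.d i) * ((∫ s in 0..G.T, w s • G.impulse i s) ⬝ᵥ G.Lhat i *ᵥ G.ytraj y0 u G.T) +
        ∫ t in 0..G.T, G.r i * (u i t * w t) := by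
  have hIk : IntervalIntegrable (fun s => (w s • G.impulse i s) ⬝ᵥ G.Lhat i *ᵥ G.ytraj y0 u G.T)
      volume 0 G.T := by
    simpa only [smul_dotProduct, smul_eq_mul] using
      (hw.intervalIntegrable 0 G.T).mul_continuousOn
        ((G.continuous_impulse i).dotProduct continuous_const).continuousOn
  rw [intervalIntegral_dotProduct (hw.intervalIntegrable_smul (G.continuous_impulse i) 0 G.T),
    ← intervalIntegral.integral_const_mul, ← intervalIntegral.integral_add (hIk.const_mul _)
      ((((hu i).mul hw).const_mul (G.r i)).intervalIntegrable 0 G.T)]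
  refine intervalIntegral.integral_congr fun t _ => ?_
  simp only [costGradient, smul_dotProduct, smul_eq_mul]
  ring

theorem intervalIntegral_mul_add_smul_sq {u w : ℝ → ℝ} (hu : AdmissibleF u) (hw : AdmissibleF w)
    (r a b ε : ℝ) :
    ∫ t in a..b, r * (u t + ε * w t) ^ 2 =
      (∫ t in a..b, r * u t ^ 2) + ε * (2 * ∫ t in a..b, r * (u t * w t)) +
        ε ^ 2 * ∫ t in a..b, r * w t ^ 2 := by
  have hsq : ∀ {f : ℝ → ℝ}, AdmissibleF f → IntervalIntegrable (fun t => r * f t ^ 2) volume a b :=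
    fun hf => by simpa only [sq] using ((hf.mul hf).const_mul r).intervalIntegrable a b
  have huw := ((hu.mul hw).const_mul r).intervalIntegrable a b
  rw [← intervalIntegral.integral_const_mul, ← intervalIntegral.integral_const_mul,
    ← intervalIntegral.integral_const_mul, ← intervalIntegral.integral_add (hsq hu)
      ((huw.const_mul 2).const_mul ε), ← intervalIntegral.integral_add
      ((hsq hu).add ((huw.const_mul 2).const_mul ε)) ((hsq hw).const_mul _)]
  refine intervalIntegral.integral_congr fun t _ => ?_
  ring

theorem exists_JF_update_eq_quadratic (hG : G.Valid) {u : Fin n → ℝ → ℝ} (hu : ∀ j, AdmissibleF (u j))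
    {w : ℝ → ℝ} (hw : AdmissibleF w) (y0 : Fin n → ℝ) (i : Fin n) :
    ∃ q : ℝ, ∀ ε : ℝ, G.JF y0 i (Function.update u i fun t => u i t + ε * w t) =
      G.JF y0 i u + ε * (2 * ∫ t in 0..G.T, w t * G.costGradient y0 u i t) + ε ^ 2 * q := by
  set a := ∫ s in 0..G.T, w s • G.impulse i s
  refine ⟨(1 / G.d i) * (a ⬝ᵥ G.Lhat i *ᵥ a) + ∫ t in 0..G.T, G.r i * w t ^ 2, fun ε => ?_⟩
  simp only [JF, ytraj_update hu hw, Function.update_self,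
    add_smul_dotProduct_mulVec_add_smul (G.Lhat_transpose hG i),
    intervalIntegral_mul_add_smul_sq (hu i) hw, intervalIntegral_mul_costGradient hu hw]
  ring

variable {y0 : Fin n → ℝ} {u : Fin n → ℝ → ℝ}

theorem NashF.intervalIntegral_mul_costGradient_eq_zero (hG : G.Valid) (hu : G.NashF y0 u)
    (i : Fin n) {w : ℝ → ℝ} (hw : AdmissibleF w) :
    ∫ t in 0..G.T, w t * G.costGradient y0 u i t = 0 := by
  obtain ⟨q, hq⟩ := exists_JF_update_eq_quadratic hG hu.1 hw y0 i
  have hstat := eq_zero_of_forall_mul_add_sq_mul_nonneg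
    (c := 2 * ∫ t in 0..G.T, w t * G.costGradient y0 u i t) (q := q) fun ε => by
      have := hu.2 i _ ((hu.1 i).add (hw.const_mul ε))
      rw [hq ε] at this
      linarith
  linarith

theorem NashF.costGradient_ae_eq_zero (hG : G.Valid) (hu : G.NashF y0 u) (i : Fin n) :
    ∀ᵐ t ∂volume.restrict (Set.Ioc 0 G.T), G.costGradient y0 u i t = 0 := by
  set k : ℝ → ℝ := fun t => (1 / G.d i) * (G.impulse i t ⬝ᵥ G.Lhat i *ᵥ G.ytraj y0 u G.T)
  have hk : Continuous k :=
    continuous_const.mul ((G.continuous_impulse i).dotProduct continuous_const)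
  -- `costGradient` itself may be unbounded off `[0, T]`, so test against a truncation of it
  set w : ℝ → ℝ := fun t => (Set.Icc 0 G.T).indicator k t + G.r i * u i t
  have hw : AdmissibleF w := (AdmissibleF.indicator_Icc hk 0 G.T).add ((hu.1 i).const_mul _)
  have hwg : Set.EqOn w (G.costGradient y0 u i) (Set.Icc 0 G.T) := fun t ht => by
    simp only [w, Set.indicator_of_mem ht, k, costGradient]
  have hww : ∫ t in 0..G.T, w t * w t = 0 := by
    refine Eq.trans (intervalIntegral.integral_congr fun t ht => ?_)
      (hu.intervalIntegral_mul_costGradient_eq_zero hG i hw)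
    rw [Set.uIcc_of_le (G.T_nonneg hG)] at ht
    rw [hwg ht]
  filter_upwards [hw.ae_eq_zero_of_integral_mul_self_eq_zero (G.T_nonneg hG) hww,
    ae_restrict_mem measurableSet_Ioc] with t hwt ht
  rw [← hwg (Set.Ioc_subset_Icc_self ht), hwt]

theorem NashF.ae_eq_feedback (hG : G.Valid) (hu : G.NashF y0 u) (i : Fin n) :
    ∀ᵐ t ∂volume.restrict (Set.Ioc 0 G.T),
      u i t = -(1 / (G.d i * G.r i)) * (G.impulse i t ⬝ᵥ G.Lhat i *ᵥ G.ytraj y0 u G.T) := by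
  have hd := (hG.2.2.2.1 i).ne'
  have hr := (hG.2.2.1 i).ne'
  filter_upwards [hu.costGradient_ae_eq_zero hG i] with t ht
  rw [costGradient] at ht
  field_simp at ht ⊢
  linarith

theorem NashF.H_mulVec_ytraj (hG : G.Valid) (hu : G.NashF y0 u) :
    G.H *ᵥ G.ytraj y0 u G.T = mexp (G.T • G.Λ) *ᵥ y0 := by
  set y := G.ytraj y0 u G.T
  have hcontrol : ∀ j, ∫ s in 0..G.T, u j s • G.impulse j s =
      -((1 / G.d j) • (G.Psi j * G.Lhat j) *ᵥ y) := by
    intro j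
    have hfb := (ae_restrict_iff' measurableSet_Ioc).mp (hu.ae_eq_feedback hG j)
    rw [← Set.uIoc_of_le (G.T_nonneg hG)] at hfb
    rw [intervalIntegral.integral_congr_ae (hfb.mono fun s hs hmem => by rw [hs hmem]),
      ← mulVec_mulVec, Psi_mulVec, smul_smul, ← neg_smul, one_div_mul_one_div]
    simp only [mul_smul, intervalIntegral.integral_smul]
    rfl
  have hy := ytraj_T_eq_sum (G := G) hu.1 y0
  simp only [hcontrol, Finset.sum_neg_distrib, ← sub_eq_add_neg, eq_sub_iff_add_eq] at hy
  simpa only [H, add_mulVec, one_mulVec, sum_mulVec, smul_mulVec] using hy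

end GameData

/-- Uniqueness of the open-loop Nash equilibrium of the delay-free game when `H` is
invertible: any two equilibria `u, v` from the same initial state `y₀` satisfy
`y_u(T) = y_v(T) = H⁻¹·exp(TΛ)·y₀` and `uᵢ = vᵢ` almost everywhere on `[0,T]`. -/
theorem statement_10 {n : ℕ} (G : GameData n) (hG : G.Valid) (hH : IsUnit G.H)
    (y0 : Fin n → ℝ) (u v : Fin n → ℝ → ℝ)
    (hu : G.NashF y0 u) (hv : G.NashF y0 v) :
    G.ytraj y0 u G.T = G.H⁻¹.mulVec ((mexp (G.T • G.Λ)).mulVec y0) ∧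
      G.ytraj y0 v G.T = G.H⁻¹.mulVec ((mexp (G.T • G.Λ)).mulVec y0) ∧
      ∀ i, ∀ᵐ t ∂(volume.restrict (Set.Icc (0:ℝ) G.T)), u i t = v i t := by
  have hterminal : ∀ {w : Fin n → ℝ → ℝ}, G.NashF y0 w →
      G.ytraj y0 w G.T = G.H⁻¹ *ᵥ (mexp (G.T • G.Λ) *ᵥ y0) := fun hw => by
    rw [← hw.H_mulVec_ytraj hG, mulVec_mulVec,
      nonsing_inv_mul _ ((isUnit_iff_isUnit_det _).mp hH), one_mulVec]
  refine ⟨hterminal hu, hterminal hv, fun i => ?_⟩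
  rw [Measure.restrict_congr_set Ioc_ae_eq_Icc.symm]
  filter_upwards [hu.ae_eq_feedback hG i, hv.ae_eq_feedback hG i] with t hut hvt
  rw [hut, hvt, hterminal hu, hterminal hv]
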